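/- (1) For every Young diagram Y contained in Y_{n,n}, the diagonal expression d(Y) = (d_{−n}(Y),…,d_n(Y)) ∈ D_{n,n} is symmetric (i.e. d_i(Y) = d_{−i}(Y) for all −n ≤ i ≤ n) if and only if Y ∈ T(Y_{n,n}). (2) For every Young diagram Y contained in Y_{n,n+1}, the diagonal expression d(Y) ∈ D_{n,n+1} is symmetric (i.e. d_i(Y) = d_{1−i}(Y) for all −n ≤ i ≤ n+1) if and only if Y ∈ T(Y_{n,n+1}). -/

import Mathlib

open Finset

/-- The rectangular Young diagram `Y_{m,n}` (boxes are 1-based pairs `(i,j)`). -/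
def rect (m n : ℕ) : Finset (ℕ × ℕ) := Finset.Icc 1 m ×ˢ Finset.Icc 1 n

/-- `Y` is a Young diagram: a finite set of 1-based boxes, downward closed. -/
def IsYD (Y : Finset (ℕ × ℕ)) : Prop :=
  (∀ p ∈ Y, 1 ≤ p.1 ∧ 1 ≤ p.2) ∧
  (∀ p ∈ Y, ∀ q : ℕ × ℕ, 1 ≤ q.1 → 1 ≤ q.2 → q.1 ≤ p.1 → q.2 ≤ p.2 → q ∈ Y)

/-- `d_k(Y)`: the number of boxes of `Y` on the `k`-th diagonal `j - i = k`. -/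
def dk (Y : Finset (ℕ × ℕ)) (k : ℤ) : ℤ :=
  ((Y.filter fun p => (p.2 : ℤ) - (p.1 : ℤ) = k).card : ℤ)

/-- The set `D_{m,n}` of diagonal sequences: non-negative, vanishing outside
`(-m, n)`, and satisfying the adjacency condition. -/
def Dseq (m n : ℕ) (a : ℤ → ℤ) : Prop :=
  (∀ k : ℤ, 0 ≤ a k) ∧
  (∀ k : ℤ, k ≤ -(m : ℤ) → a k = 0) ∧
  (∀ k : ℤ, (n : ℤ) ≤ k → a k = 0) ∧
  (∀ i : ℤ, -(m : ℤ) < i → i ≤ 0 → a (i - 1) ≤ a i ∧ a i ≤ a (i - 1) + 1) ∧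
  (∀ i : ℤ, 0 < i → i ≤ (n : ℤ) → a i ≤ a (i - 1) ∧ a (i - 1) ≤ a i + 1)

/-- `a_{[l,r]}`: subtract `1` from the components indexed by `l ≤ k ≤ r`. -/
def cut (a : ℤ → ℤ) (l r : ℤ) : ℤ → ℤ := fun k => if l ≤ k ∧ k ≤ r then a k - 1 else a k

/-- The pair `(x,y)` sitting at positions `(k-1,k)` satisfies the adjacency condition. -/
def adjPair (k x y : ℤ) : Prop := if k ≤ 0 then x ≤ y ∧ y ≤ x + 1 else y ≤ x ∧ x ≤ y + 1

/-- `(a_{k-1}, a_k)` is a left bulge, `a_{k-1} ↘ a_k`. -/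
def leftBulge (a : ℤ → ℤ) (k : ℤ) : Prop :=
  adjPair k (a (k - 1)) (a k) ∧ adjPair k (a (k - 1) - 1) (a k)

/-- `(a_{k-1}, a_k)` is a right bulge, `a_{k-1} ↗ a_k`. -/
def rightBulge (a : ℤ → ℤ) (k : ℤ) : Prop :=
  adjPair k (a (k - 1)) (a k) ∧ adjPair k (a (k - 1)) (a k - 1)

/-- The map `E` duplicating the `c`-th component of a sequence. -/
def Emap (c : ℤ) (a : ℤ → ℤ) : ℤ → ℤ := fun k => if k ≤ c then a k else a (k - 1)

def el (c k : ℤ) : ℤ := if k ≤ c then k else k + 1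

def er (c k : ℤ) : ℤ := if k < c then k else k + 1

/-- The unimodal numbering `α_{m,n}(i,j) = min (j-i+m) (i-j+n)`. -/
def unimodal (m n : ℕ) (p : ℕ × ℕ) : ℤ :=
  min ((p.2 : ℤ) - (p.1 : ℤ) + m) ((p.1 : ℤ) - (p.2 : ℤ) + n)

/-- `A(X)`: the multiset of unimodal numbers of the boxes of `X`. -/
def Amul (m n : ℕ) (X : Finset (ℕ × ℕ)) : Multiset ℤ := X.val.map (unimodal m n)

/-- The hook of the box `(i,j)` in `Y`. -/
def hook (Y : Finset (ℕ × ℕ)) (i j : ℕ) : Finset (ℕ × ℕ) :=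
  Y.filter fun p => (p.1 = i ∧ j ≤ p.2) ∨ (p.2 = j ∧ i ≤ p.1)

/-- After removing the hook of `(i,j)`, boxes strictly south-east of `(i,j)` move
up-left by one step. -/
def shiftBox (i j : ℕ) (p : ℕ × ℕ) : ℕ × ℕ :=
  if i < p.1 ∧ j < p.2 then (p.1 - 1, p.2 - 1) else p

/-- The Young diagram `Y ∖ h_Y(i,j)` obtained by removing the hook of `(i,j)`. -/
def removeHook (Y : Finset (ℕ × ℕ)) (i j : ℕ) : Finset (ℕ × ℕ) :=
  (Y \ hook Y i j).image (shiftBox i j)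

/-- One move of MHRG(m,n): remove a hook; if the resulting diagram has a hook with
the same multiset of unimodal numbers, one such hook must also be removed
(this second removal happens at most once). -/
def Move (m n : ℕ) (Y Y' : Finset (ℕ × ℕ)) : Prop :=
  ∃ i j : ℕ, (i, j) ∈ Y ∧
    ((Y' = removeHook Y i j ∧
        ¬∃ i' j' : ℕ, (i', j') ∈ removeHook Y i j ∧
          Amul m n (hook (removeHook Y i j) i' j') = Amul m n (hook Y i j)) ∨
      (∃ i' j' : ℕ, (i', j') ∈ removeHook Y i j ∧
        Amul m n (hook (removeHook Y i j) i' j') = Amul m n (hook Y i j) ∧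
        Y' = removeHook (removeHook Y i j) i' j'))

/-- `T(Y_{m,n})`: the positions of MHRG(m,n) reachable from the starting position. -/
def Reach (m n : ℕ) (Y : Finset (ℕ × ℕ)) : Prop :=
  Relation.ReflTransGen (Move m n) (rect m n) Y

/-- `O(Y)`: the set of options of a position `Y` in MHRG(m,n). -/
def Opt (m n : ℕ) (Y : Finset (ℕ × ℕ)) : Set (Finset (ℕ × ℕ)) := {Y' | Move m n Y Y'}

lemma card_removeHook_lt (Y : Finset (ℕ × ℕ)) (i j : ℕ) (h : (i, j) ∈ Y) :
    (removeHook Y i j).card < Y.card := by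
  have hsub : hook Y i j ⊆ Y := Finset.filter_subset _ _
  have hmem : (i, j) ∈ hook Y i j :=
    Finset.mem_filter.mpr ⟨h, Or.inl ⟨rfl, le_rfl⟩⟩
  have h1 : (removeHook Y i j).card ≤ (Y \ hook Y i j).card := Finset.card_image_le
  have h2 : (Y \ hook Y i j).card = Y.card - (hook Y i j).card := Finset.card_sdiff_of_subset hsub
  have h3 : 0 < (hook Y i j).card := Finset.card_pos.mpr ⟨_, hmem⟩
  have h4 : (hook Y i j).card ≤ Y.card := Finset.card_le_card hsub
  omega

lemma move_card_lt {m n : ℕ} {Y Y' : Finset (ℕ × ℕ)} (h : Move m n Y Y') :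
    Y'.card < Y.card := by
  obtain ⟨i, j, hij, hc⟩ := h
  rcases hc with ⟨rfl, -⟩ | ⟨i', j', hij', -, rfl⟩
  · exact card_removeHook_lt Y i j hij
  · exact (card_removeHook_lt _ i' j' hij').trans (card_removeHook_lt Y i j hij)

/-- The minimal excludant. -/
noncomputable def mex (s : Set ℕ) : ℕ := sInf {k | k ∉ s}

/-- The Grundy value of a position of MHRG(m,n). -/
noncomputable def grundy (m n : ℕ) (Y : Finset (ℕ × ℕ)) : ℕ :=
  mex {g : ℕ | ∃ Y', ∃ _ : Move m n Y Y', grundy m n Y' = g}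
termination_by Y.card
decreasing_by exact move_card_lt (by assumption)

/-- The two-row Young diagram `(λ₁, λ₂)`. -/
def tworow (a b : ℕ) : Finset (ℕ × ℕ) :=
  ({1} : Finset ℕ) ×ˢ Finset.Icc 1 a ∪ ({2} : Finset ℕ) ×ˢ Finset.Icc 1 b

/-- `S` is a shifted Young diagram: rows are intervals `[i, λ_i]` with `λ` strictly
decreasing. -/
def IsShifted (S : Finset (ℕ × ℕ)) : Prop :=
  (∀ p ∈ S, 1 ≤ p.1 ∧ p.1 ≤ p.2) ∧
  (∀ p ∈ S, ∀ j' : ℕ, p.1 ≤ j' → j' ≤ p.2 → (p.1, j') ∈ S) ∧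
  (∀ p ∈ S, 2 ≤ p.1 → (p.1 - 1, p.2 + 1) ∈ S)

/-- The shifted Young diagram of a (strictly decreasing, positive) list of row lengths. -/
def shiftedOf (l : List ℕ) : Finset (ℕ × ℕ) :=
  (Finset.range l.length).biUnion fun i =>
    ({i + 1} : Finset ℕ) ×ˢ Finset.Icc (i + 1) (l.getD i 0)

/-- The staircase `S_n = (n, n-1, …, 1)`. -/
def staircase (n : ℕ) : List ℕ := (List.range n).map fun i => n - i

/-- The shifted hook of the box `(i,j)` in `S` (box, arm, leg and tail). -/
def shook (S : Finset (ℕ × ℕ)) (i j : ℕ) : Finset (ℕ × ℕ) :=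
  S.filter fun p => (p.1 = i ∧ j ≤ p.2) ∨ (p.2 = j ∧ i ≤ p.1) ∨ (p.1 = j + 1 ∧ j < p.2)

/-- The shifting of boxes performed after removing the shifted hook of `(i,j)`. -/
def sShiftBox (i j : ℕ) (p : ℕ × ℕ) : ℕ × ℕ :=
  if i < p.1 ∧ p.1 < j + 1 ∧ j < p.2 then (p.1 - 1, p.2 - 1)
  else if j + 1 < p.1 then (p.1 - 2, p.2 - 2)
  else p

/-- The shifted Young diagram obtained by removing the shifted hook of `(i,j)`. -/
def sRemoveHook (S : Finset (ℕ × ℕ)) (i j : ℕ) : Finset (ℕ × ℕ) :=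
  (S \ shook S i j).image (sShiftBox i j)

/-- One move of HRG on shifted Young diagrams: remove one hook. -/
def SMove (S S' : Finset (ℕ × ℕ)) : Prop :=
  ∃ i j : ℕ, (i, j) ∈ S ∧ S' = sRemoveHook S i j

lemma card_sRemoveHook_lt (S : Finset (ℕ × ℕ)) (i j : ℕ) (h : (i, j) ∈ S) :
    (sRemoveHook S i j).card < S.card := by
  have hsub : shook S i j ⊆ S := Finset.filter_subset _ _
  have hmem : (i, j) ∈ shook S i j :=
    Finset.mem_filter.mpr ⟨h, Or.inl ⟨rfl, le_rfl⟩⟩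
  have h1 : (sRemoveHook S i j).card ≤ (S \ shook S i j).card := Finset.card_image_le
  have h2 : (S \ shook S i j).card = S.card - (shook S i j).card := Finset.card_sdiff_of_subset hsub
  have h3 : 0 < (shook S i j).card := Finset.card_pos.mpr ⟨_, hmem⟩
  have h4 : (shook S i j).card ≤ S.card := Finset.card_le_card hsub
  omega

lemma smove_card_lt {S S' : Finset (ℕ × ℕ)} (h : SMove S S') : S'.card < S.card := by
  obtain ⟨i, j, hij, rfl⟩ := h
  exact card_sRemoveHook_lt S i j hij

/-- The Grundy value of a position of HRG on shifted Young diagrams. -/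
noncomputable def sgrundy (S : Finset (ℕ × ℕ)) : ℕ :=
  mex {g : ℕ | ∃ S', ∃ _ : SMove S S', sgrundy S' = g}
termination_by S.card
decreasing_by exact smove_card_lt (by assumption)

/-- `OH(Y)` for a two-row diagram `Y = (λ₁,λ₂)`: the results of single hook removals. -/
def OH (l1 l2 : ℕ) : Set (Finset (ℕ × ℕ)) :=
  {Y | ∃ a : ℕ, l2 ≤ a ∧ a < l1 ∧ Y = tworow a l2} ∪
  {Y | ∃ b : ℕ, b < l2 ∧ Y = tworow l1 b} ∪
  {Y | ∃ a : ℕ, a < l2 ∧ Y = tworow (l2 - 1) a}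

/-!
A diagram `Y ⊆ Y_{m,n}` is determined by its diagonal sequence `d(Y)`, and removing the hook of
`(i, j)` lowers `d(Y)` by one on the interval `[l, r]` of diagonals the hook covers. The numbering
`α_{m,n}` depends only on the diagonal and is unimodal about `s / 2`, where `s = n - m ∈ {0, 1}`, so
`A(h)` determines `[l, r]` up to the reflection `k ↦ s - k`. Hence a second hook is forced exactly
when the mirror interval `[s - r, s - l]` bounds a hook after the first removal, and it is then that
hook; if `d(Y)` is symmetric and `[l, r]` is not, the mirror interval always bounds one. So a move
from a symmetric position removes a symmetric interval or a mirror pair of intervals, and `d` stays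
symmetric. Conversely a symmetric `Y ≠ Y_{m,n}` arises by a move from the symmetric diagram with one
more symmetric hook, and induction on `|Y_{m,n}| - |Y|` gives reachability.
-/

lemma eq_Icc_one_card {S : Finset ℕ} (hpos : ∀ u ∈ S, 1 ≤ u)
    (hdown : ∀ u ∈ S, ∀ v, 1 ≤ v → v ≤ u → v ∈ S) : S = Icc 1 #S := by
  refine eq_of_subset_of_card_le (fun u hu => mem_Icc.2 ⟨hpos u hu, ?_⟩) (by simp)
  calc u = #(Icc 1 u) := by simp
    _ ≤ #S := card_le_card fun v hv => hdown u hu v (mem_Icc.1 hv).1 (mem_Icc.1 hv).2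

/-- If `Y` meets the line `P = range f` in a downward closed segment `f 1, f 2, …`, the
segment has `#(Y.filter P)` boxes. -/
lemma mem_iff_le_card_filter {Y : Finset (ℕ × ℕ)} {P : ℕ × ℕ → Prop} [DecidablePred P]
    {f : ℕ → ℕ × ℕ} (hf : f.Injective) (hP : ∀ t, P (f t))
    (hline : ∀ p ∈ Y, P p → ∃ t, 1 ≤ t ∧ f t = p)
    (hdown : ∀ u, f u ∈ Y → ∀ v, 1 ≤ v → v ≤ u → f v ∈ Y) {t : ℕ} (ht : 1 ≤ t) :
    f t ∈ Y ↔ t ≤ #(Y.filter P) := by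
  classical
  set S := (Y.filter P).preimage f hf.injOn
  have hS : ∀ u, u ∈ S ↔ f u ∈ Y := fun u => by simp [S, hP]
  have hcard : #S = #(Y.filter P) := by
    rw [card_preimage, filter_true_of_mem]
    intro p hp
    obtain ⟨u, -, rfl⟩ := hline p (mem_filter.1 hp).1 (mem_filter.1 hp).2
    exact ⟨u, rfl⟩
  have hSeq : S = Icc 1 #S := by
    refine eq_Icc_one_card (fun u hu => ?_)
      fun u hu v hv hvu => (hS v).2 (hdown u ((hS u).1 hu) v hv hvu)
    obtain ⟨v, hv, hvu⟩ := hline _ ((hS u).1 hu) (hP u)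
    exact hf hvu ▸ hv
  rw [← hS, hSeq, mem_Icc, hcard]
  exact and_iff_right ht

lemma dk_nonneg (Y : Finset (ℕ × ℕ)) (k : ℤ) : 0 ≤ dk Y k := Int.natCast_nonneg _

lemma dk_mono {Y Z : Finset (ℕ × ℕ)} (h : Y ⊆ Z) (k : ℤ) : dk Y k ≤ dk Z k := by
  unfold dk
  exact_mod_cast card_le_card (filter_subset_filter _ h)

lemma adjPair_iff {k x y : ℤ} :
    adjPair k x y ↔ (k ≤ 0 → x ≤ y ∧ y ≤ x + 1) ∧ (0 < k → y ≤ x ∧ x ≤ y + 1) := by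
  unfold adjPair
  split_ifs <;> omega

def diagBox (k : ℤ) (t : ℕ) : ℕ × ℕ := (t + (-k).toNat, t + k.toNat)

def rowLen (Y : Finset (ℕ × ℕ)) (i : ℕ) : ℕ := #(Y.filter (·.1 = i))

def colLen (Y : Finset (ℕ × ℕ)) (j : ℕ) : ℕ := #(Y.filter (·.2 = j))

namespace IsYD

variable {Y Z : Finset (ℕ × ℕ)}

lemma mem_diagBox_iff (hY : IsYD Y) (k : ℤ) (t : ℕ) :
    diagBox k t ∈ Y ↔ 1 ≤ t ∧ (t : ℤ) ≤ dk Y k := by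
  rcases Nat.eq_zero_or_pos t with rfl | ht
  · refine iff_of_false (fun h => ?_) (by omega)
    have := hY.1 _ h
    simp only [diagBox] at this
    omega
  rw [dk, mem_iff_le_card_filter (P := fun p => (p.2 : ℤ) - p.1 = k) (f := diagBox k)
    (fun u v h => by simp [diagBox] at h; omega) (fun u => by simp [diagBox])
    (fun p hp _ => ⟨min p.1 p.2, by have := hY.1 p hp; omega,
      by ext <;> simp [diagBox] <;> omega⟩)
    (fun u hu v hv hvu => hY.2 _ hu _ (by simp [diagBox]; omega) (by simp [diagBox]; omega)
      (by simp [diagBox]; omega) (by simp [diagBox]; omega)) ht]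
  omega

lemma mem_iff (hY : IsYD Y) (i j : ℕ) :
    (i, j) ∈ Y ↔ 1 ≤ i ∧ 1 ≤ j ∧ (min i j : ℕ) ≤ dk Y ((j : ℤ) - i) := by
  have hp : diagBox ((j : ℤ) - i) (min i j) = (i, j) := by ext <;> simp [diagBox] <;> omega
  rw [← hp, hY.mem_diagBox_iff]
  omega

lemma ext_dk (hY : IsYD Y) (hZ : IsYD Z) (h : ∀ k, dk Y k = dk Z k) : Y = Z := by
  ext ⟨i, j⟩
  rw [hY.mem_iff, hZ.mem_iff, h]

lemma dk_eq_of_forall_mem_diagBox_iff (hY : IsYD Y) {k x : ℤ} (hx : 0 ≤ x)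
    (h : ∀ t, 1 ≤ t → (diagBox k t ∈ Y ↔ (t : ℤ) ≤ x)) : dk Y k = x := by
  have := dk_nonneg Y k
  rcases lt_trichotomy (dk Y k) x with hlt | heq | hgt
  · have := (hY.mem_diagBox_iff k x.toNat).1 ((h _ (by omega)).2 (by omega))
    omega
  · exact heq
  · have := (h _ (by omega)).1 ((hY.mem_diagBox_iff k (dk Y k).toNat).2 (by omega))
    omega

lemma dk_le_dk_add (hY : IsYD Y) {k k' : ℤ} {d : ℕ}
    (h : ∀ t, 1 ≤ t → (diagBox k' t).1 ≤ (diagBox k (t + d)).1 ∧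
      (diagBox k' t).2 ≤ (diagBox k (t + d)).2) :
    dk Y k ≤ dk Y k' + d := by
  by_contra! hlt
  have := dk_nonneg Y k'
  obtain ⟨t, ht⟩ : ∃ t : ℕ, (t : ℤ) = dk Y k - d := ⟨(dk Y k - d).toNat, by omega⟩
  have hmem := (hY.mem_diagBox_iff k (t + d)).2 (by omega)
  have := (hY.mem_diagBox_iff k' t).1 (hY.2 _ hmem _ (by simp [diagBox]; omega)
    (by simp [diagBox]; omega) (h t (by omega)).1 (h t (by omega)).2)
  omega

lemma adjPair_dk (hY : IsYD Y) (k : ℤ) : adjPair k (dk Y (k - 1)) (dk Y k) := by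
  have h0 := hY.dk_le_dk_add (k := k - 1) (k' := k) (d := 0)
  have h1 := hY.dk_le_dk_add (k := k) (k' := k - 1) (d := 1)
  have h2 := hY.dk_le_dk_add (k := k) (k' := k - 1) (d := 0)
  have h3 := hY.dk_le_dk_add (k := k - 1) (k' := k) (d := 1)
  simp only [diagBox] at h0 h1 h2 h3
  rw [adjPair_iff]
  refine ⟨fun hk => ⟨?_, ?_⟩, fun hk => ⟨?_, ?_⟩⟩
  · simpa using h0 fun t _ => by omega
  · exact h1 fun t _ => by omega
  · simpa using h2 fun t _ => by omega
  · exact h3 fun t _ => by omega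

lemma mem_iff_le_rowLen (hY : IsYD Y) {i j : ℕ} (hi : 1 ≤ i) (hj : 1 ≤ j) :
    (i, j) ∈ Y ↔ j ≤ rowLen Y i :=
  mem_iff_le_card_filter (f := fun t => (i, t)) (fun _ _ h => (Prod.mk.inj h).2) (fun _ => rfl)
    (fun p hp hpi => ⟨p.2, (hY.1 p hp).2, by rw [← hpi]⟩)
    (fun u hu v hv hvu => hY.2 _ hu _ hi hv le_rfl hvu) hj

lemma mem_iff_le_colLen (hY : IsYD Y) {i j : ℕ} (hi : 1 ≤ i) (hj : 1 ≤ j) :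
    (i, j) ∈ Y ↔ i ≤ colLen Y j :=
  mem_iff_le_card_filter (f := fun t => (t, j)) (fun _ _ h => (Prod.mk.inj h).1) (fun _ => rfl)
    (fun p hp hpj => ⟨p.1, (hY.1 p hp).1, by rw [← hpj]⟩)
    (fun u hu v hv hvu => hY.2 _ hu _ hv hj hvu le_rfl) hi

end IsYD

lemma isYD_rect (m n : ℕ) : IsYD (rect m n) := by
  refine ⟨fun p hp => ?_, fun p hp q hq1 hq2 hqp1 hqp2 => ?_⟩ <;>
    simp only [rect, mem_product, mem_Icc] at * <;> omega

lemma dk_rect (m n : ℕ) (k : ℤ) :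
    dk (rect m n) k = max 0 (min (min (m : ℤ) n) (min (k + m) (n - k))) := by
  refine (isYD_rect m n).dk_eq_of_forall_mem_diagBox_iff (le_max_left _ _) fun t ht => ?_
  simp only [rect, diagBox, mem_product, mem_Icc]
  omega

lemma dk_eq_zero_of_subset_rect {Y : Finset (ℕ × ℕ)} {m n : ℕ} (hsub : Y ⊆ rect m n) {k : ℤ}
    (hk : k ≤ -(m : ℤ) ∨ (n : ℤ) ≤ k) : dk Y k = 0 := by
  have hle := dk_mono hsub k
  rw [dk_rect] at hle
  have := dk_nonneg Y k
  omega

lemma exists_dk_eq {m n : ℕ} {b : ℤ → ℤ} (hadj : ∀ k, adjPair k (b (k - 1)) (b k))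
    (h0 : ∀ k, 0 ≤ b k) (hle : ∀ k, b k ≤ dk (rect m n) k) :
    ∃ Z : Finset (ℕ × ℕ), IsYD Z ∧ Z ⊆ rect m n ∧ ∀ k, dk Z k = b k := by
  set φ : ℕ → ℕ → ℤ := fun i j => (min i j : ℕ) - b ((j : ℤ) - i)
  have hφi : ∀ j, Monotone (φ · j) := fun j => monotone_nat_of_le_succ fun i => by
    have := adjPair_iff.1 (hadj ((j : ℤ) - i))
    simp only [φ, Nat.cast_add, Nat.cast_one, show (j : ℤ) - (i + 1) = j - i - 1 by ring]
    omega
  have hφj : ∀ i, Monotone (φ i) := fun i => monotone_nat_of_le_succ fun j => by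
    have := adjPair_iff.1 (hadj ((j : ℤ) - i + 1))
    simp only [add_sub_cancel_right] at this
    simp only [φ, Nat.cast_add, Nat.cast_one, show (j : ℤ) + 1 - i = j - i + 1 by ring]
    omega
  set Z := (rect m n).filter (fun p => φ p.1 p.2 ≤ 0)
  have hZ : IsYD Z := by
    refine ⟨fun p hp => (isYD_rect m n).1 p (mem_filter.1 hp).1, fun p hp q h1 h2 h3 h4 => ?_⟩
    obtain ⟨hp, hφ⟩ := mem_filter.1 hp
    exact mem_filter.2 ⟨(isYD_rect m n).2 p hp q h1 h2 h3 h4,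
      ((hφi q.2 h3).trans (hφj p.1 h4)).trans hφ⟩
  refine ⟨Z, hZ, filter_subset _ _,
    fun k => hZ.dk_eq_of_forall_mem_diagBox_iff (h0 k) fun t ht => ?_⟩
  have := hle k
  rw [mem_filter, (isYD_rect m n).mem_diagBox_iff]
  simp only [φ, diagBox]
  rw [show ((t + k.toNat : ℕ) : ℤ) - (t + (-k).toNat : ℕ) = k by omega]
  omega

/-- The hook of `(i, j)` covers the diagonals from `legDiag Y j`, that of the bottom box of its
leg, to `armDiag Y i`, that of the last box of its arm. -/
def legDiag (Y : Finset (ℕ × ℕ)) (j : ℕ) : ℤ := j - colLen Y j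

def armDiag (Y : Finset (ℕ × ℕ)) (i : ℕ) : ℤ := rowLen Y i - i

def hookBox (i j : ℕ) (k : ℤ) : ℕ × ℕ :=
  if (j : ℤ) - i ≤ k then (i, ((i : ℤ) + k).toNat) else (((j : ℤ) - k).toNat, j)

lemma hookBox_diag (i j : ℕ) (k : ℤ) : ((hookBox i j k).2 : ℤ) - (hookBox i j k).1 = k := by
  unfold hookBox
  split_ifs <;> simp only <;> omega

lemma hook_subset (Y : Finset (ℕ × ℕ)) (i j : ℕ) : hook Y i j ⊆ Y := filter_subset _ _

/-- `α_{m,n}` on the diagonal `k`. -/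
def tent (m n : ℕ) (k : ℤ) : ℤ := min (k + m) (n - k)

namespace IsYD

variable {Y : Finset (ℕ × ℕ)} {i j : ℕ}

lemma hook_eq_image (hY : IsYD Y) (hij : (i, j) ∈ Y) :
    hook Y i j = (Icc (legDiag Y j) (armDiag Y i)).image (hookBox i j) := by
  have hi : 1 ≤ i := (hY.1 _ hij).1
  have hj : 1 ≤ j := (hY.1 _ hij).2
  have := (hY.mem_iff_le_rowLen hi hj).1 hij
  have := (hY.mem_iff_le_colLen hi hj).1 hij
  ext ⟨p, q⟩
  simp only [hook, mem_filter, mem_image, mem_Icc, legDiag, armDiag, hookBox]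
  constructor
  · rintro ⟨hpq, ⟨rfl, hq⟩ | ⟨rfl, hp⟩⟩
    · have := (hY.mem_iff_le_rowLen hi (by omega)).1 hpq
      exact ⟨q - p, by omega, by rw [if_pos (by omega)]; ext <;> simp⟩
    · have := (hY.mem_iff_le_colLen (by omega) hj).1 hpq
      refine ⟨q - p, by omega, ?_⟩
      split_ifs <;> ext <;> simp <;> omega
  · rintro ⟨k, hk, hpq⟩
    split_ifs at hpq <;> simp only [Prod.mk.injEq] at hpq <;> obtain ⟨rfl, rfl⟩ := hpq
    · exact ⟨(hY.mem_iff_le_rowLen hi (by omega)).2 (by omega), Or.inl ⟨rfl, by omega⟩⟩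
    · exact ⟨(hY.mem_iff_le_colLen (by omega) hj).2 (by omega), Or.inr ⟨rfl, by omega⟩⟩

lemma dk_hook (hY : IsYD Y) (hij : (i, j) ∈ Y) (k : ℤ) :
    dk (hook Y i j) k = if legDiag Y j ≤ k ∧ k ≤ armDiag Y i then 1 else 0 := by
  have hdiag := hookBox_diag i j
  rw [hY.hook_eq_image hij, dk, filter_image,
    card_image_of_injOn fun x _ y _ h => by rw [← hdiag x, ← hdiag y, h]]
  simp only [hdiag, filter_eq', mem_Icc]
  split_ifs <;> simp

lemma Amul_hook (hY : IsYD Y) (hij : (i, j) ∈ Y) (m n : ℕ) :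
    Amul m n (hook Y i j) = (Icc (legDiag Y j) (armDiag Y i)).val.map (tent m n) := by
  have hdiag := hookBox_diag i j
  rw [Amul, hY.hook_eq_image hij,
    image_val_of_injOn fun x _ y _ h => by rw [← hdiag x, ← hdiag y, h], Multiset.map_map]
  refine Multiset.map_congr rfl fun k _ => ?_
  have := hdiag k
  rw [Function.comp_apply, unimodal, tent]
  omega

lemma legDiag_le_armDiag (hY : IsYD Y) (hij : (i, j) ∈ Y) : legDiag Y j ≤ armDiag Y i := by
  have hi : 1 ≤ i := (hY.1 _ hij).1
  have hj : 1 ≤ j := (hY.1 _ hij).2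
  have := (hY.mem_iff_le_rowLen hi hj).1 hij
  have := (hY.mem_iff_le_colLen hi hj).1 hij
  unfold legDiag armDiag
  omega

end IsYD

lemma mem_removeHook {Y : Finset (ℕ × ℕ)} {i j : ℕ} {q : ℕ × ℕ} :
    q ∈ removeHook Y i j ↔ if i ≤ q.1 ∧ j ≤ q.2 then (q.1 + 1, q.2 + 1) ∈ Y else q ∈ Y := by
  simp only [removeHook, mem_image, mem_sdiff, hook, mem_filter, shiftBox]
  constructor
  · rintro ⟨p, ⟨hp, hph⟩, rfl⟩
    split_ifs with h1 h2 h2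
    · convert hp using 1; ext <;> simp <;> omega
    · simp at h2; omega
    · exact absurd ⟨hp, by omega⟩ hph
    · exact hp
  · split_ifs with h
    · exact fun hq => ⟨_, ⟨hq, fun _ => by omega⟩, by rw [if_pos (by omega)]; ext <;> simp⟩
    · exact fun hq => ⟨q, ⟨hq, fun _ => by omega⟩, if_neg (by omega)⟩

lemma isYD_removeHook {Y : Finset (ℕ × ℕ)} (hY : IsYD Y) {i j : ℕ} (hij : (i, j) ∈ Y) :
    IsYD (removeHook Y i j) := by
  have hi : 1 ≤ i := (hY.1 _ hij).1
  have hj : 1 ≤ j := (hY.1 _ hij).2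
  refine ⟨fun p hp => ?_, fun p hp q hq1 hq2 hqp1 hqp2 => ?_⟩ <;> rw [mem_removeHook] at *
  · split_ifs at hp
    · omega
    · exact hY.1 p hp
  · split_ifs at hp ⊢ <;> exact hY.2 _ hp _ (by omega) (by omega) (by omega) (by omega)

lemma removeHook_subset_rect {Y : Finset (ℕ × ℕ)} {m n : ℕ} (hsub : Y ⊆ rect m n) {i j : ℕ}
    (hij : (i, j) ∈ Y) : removeHook Y i j ⊆ rect m n := by
  have hij' := hsub hij
  intro q hq
  rw [mem_removeHook] at hq
  split_ifs at hq
  · have := hsub hq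
    simp only [rect, mem_product, mem_Icc] at this hij' ⊢
    omega
  · exact hsub hq

lemma dk_image {s : Finset (ℕ × ℕ)} {f : ℕ × ℕ → ℕ × ℕ} (hf : Set.InjOn f s)
    (hdiag : ∀ p ∈ s, ((f p).2 : ℤ) - (f p).1 = (p.2 : ℤ) - p.1) (k : ℤ) :
    dk (s.image f) k = dk s k := by
  rw [dk, dk, filter_image, card_image_of_injOn (hf.mono (coe_subset.2 (filter_subset _ _))),
    filter_congr fun p hp => by rw [hdiag p hp]]

lemma dk_sdiff {X Y : Finset (ℕ × ℕ)} (h : X ⊆ Y) (k : ℤ) : dk (Y \ X) k = dk Y k - dk X k := by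
  have hfilt : (Y \ X).filter (fun p => (p.2 : ℤ) - p.1 = k) =
      Y.filter (fun p => (p.2 : ℤ) - p.1 = k) \ X.filter (fun p => (p.2 : ℤ) - p.1 = k) := by
    ext
    simp only [mem_filter, mem_sdiff]
    tauto
  have hsub := filter_subset_filter (fun p : ℕ × ℕ => (p.2 : ℤ) - p.1 = k) h
  rw [dk, dk, dk, hfilt, card_sdiff_of_subset hsub, Nat.cast_sub (card_le_card hsub)]

lemma IsYD.dk_removeHook {Y : Finset (ℕ × ℕ)} (hY : IsYD Y) {i j : ℕ} (hij : (i, j) ∈ Y)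
    (k : ℤ) : dk (removeHook Y i j) k = cut (dk Y) (legDiag Y j) (armDiag Y i) k := by
  have hinj : Set.InjOn (shiftBox i j) ↑(Y \ hook Y i j) := by
    intro p hp q hq h
    simp only [coe_sdiff, Set.mem_sdiff, mem_coe, hook, mem_filter, shiftBox, not_and] at hp hq h
    have := hp.2 hp.1
    have := hq.2 hq.1
    split_ifs at h <;> simp only [Prod.ext_iff] at h ⊢ <;> omega
  have hdiag : ∀ p ∈ Y \ hook Y i j,
      ((shiftBox i j p).2 : ℤ) - (shiftBox i j p).1 = (p.2 : ℤ) - p.1 := by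
    intro p _
    unfold shiftBox
    split_ifs <;> omega
  rw [removeHook, dk_image hinj hdiag, dk_sdiff (hook_subset Y i j), hY.dk_hook hij, cut]
  split_ifs <;> omega

/-- Some row of a diagram with diagonal sequence `a` ends on diagonal `r`. -/
def RowEndsAt (a : ℤ → ℤ) (r : ℤ) : Prop :=
  (0 ≤ r ∧ a r = a (r + 1) + 1) ∨ (r < 0 ∧ 0 < a r ∧ a r = a (r + 1))

/-- Some column of a diagram with diagonal sequence `a` ends on diagonal `l`. -/
def ColEndsAt (a : ℤ → ℤ) (l : ℤ) : Prop :=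
  (l ≤ 0 ∧ a l = a (l - 1) + 1) ∨ (0 < l ∧ 0 < a l ∧ a l = a (l - 1))

namespace IsYD

variable {Y : Finset (ℕ × ℕ)}

lemma rowEndsAt_iff (hY : IsYD Y) {r : ℤ} :
    RowEndsAt (dk Y) r ↔ ∃ i w : ℕ, (i, w) ∈ Y ∧ (i, w + 1) ∉ Y ∧ (w : ℤ) - i = r := by
  have hadj := adjPair_iff.1 (hY.adjPair_dk (r + 1))
  rw [add_sub_cancel_right] at hadj
  have := dk_nonneg Y r
  have := dk_nonneg Y (r + 1)
  constructor
  · rintro (⟨hr, he⟩ | ⟨hr, hpos, he⟩)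
    · obtain ⟨i, hi⟩ : ∃ i : ℕ, (i : ℤ) = dk Y r := ⟨(dk Y r).toNat, by omega⟩
      refine ⟨i, i + r.toNat, ?_, ?_, by omega⟩ <;> rw [hY.mem_iff] <;> push_cast
      · rw [show (i : ℤ) + r.toNat - i = r by omega]; omega
      · rw [show (i : ℤ) + r.toNat + 1 - i = r + 1 by omega]; omega
    · obtain ⟨w, hw⟩ : ∃ w : ℕ, (w : ℤ) = dk Y r := ⟨(dk Y r).toNat, by omega⟩
      refine ⟨w + (-r).toNat, w, ?_, ?_, by omega⟩ <;> rw [hY.mem_iff] <;> push_cast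
      · rw [show (w : ℤ) - (w + (-r).toNat) = r by omega]; omega
      · rw [show (w : ℤ) + 1 - (w + (-r).toNat) = r + 1 by omega]; omega
  · rintro ⟨i, w, hin, hout, rfl⟩
    rw [hY.mem_iff] at hin hout
    rw [Nat.cast_add, Nat.cast_one, show (w : ℤ) + 1 - i = w - i + 1 by ring] at hout
    unfold RowEndsAt
    omega

lemma colEndsAt_iff (hY : IsYD Y) {l : ℤ} :
    ColEndsAt (dk Y) l ↔ ∃ v j : ℕ, (v, j) ∈ Y ∧ (v + 1, j) ∉ Y ∧ (j : ℤ) - v = l := by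
  have hadj := adjPair_iff.1 (hY.adjPair_dk l)
  have := dk_nonneg Y l
  have := dk_nonneg Y (l - 1)
  constructor
  · rintro (⟨hl, he⟩ | ⟨hl, hpos, he⟩)
    · obtain ⟨j, hj⟩ : ∃ j : ℕ, (j : ℤ) = dk Y l := ⟨(dk Y l).toNat, by omega⟩
      refine ⟨j + (-l).toNat, j, ?_, ?_, by omega⟩ <;> rw [hY.mem_iff] <;> push_cast
      · rw [show (j : ℤ) - (j + (-l).toNat) = l by omega]; omega
      · rw [show (j : ℤ) - (j + (-l).toNat + 1) = l - 1 by omega]; omega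
    · obtain ⟨v, hv⟩ : ∃ v : ℕ, (v : ℤ) = dk Y l := ⟨(dk Y l).toNat, by omega⟩
      refine ⟨v, v + l.toNat, ?_, ?_, by omega⟩ <;> rw [hY.mem_iff] <;> push_cast
      · rw [show (v : ℤ) + l.toNat - v = l by omega]; omega
      · rw [show (v : ℤ) + l.toNat - (v + 1) = l - 1 by omega]; omega
  · rintro ⟨v, j, hin, hout, rfl⟩
    rw [hY.mem_iff] at hin hout
    rw [Nat.cast_add, Nat.cast_one, show (j : ℤ) - (v + 1) = j - v - 1 by ring] at hout
    unfold ColEndsAt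
    omega

lemma rowLen_eq {i w : ℕ} (hY : IsYD Y) (hin : (i, w) ∈ Y) (hout : (i, w + 1) ∉ Y) :
    rowLen Y i = w := by
  have hi : 1 ≤ i := (hY.1 _ hin).1
  have := (hY.mem_iff_le_rowLen hi (hY.1 _ hin).2).1 hin
  have := (hY.mem_iff_le_rowLen hi (Nat.le_add_left 1 w)).not.1 hout
  omega

lemma colLen_eq {v j : ℕ} (hY : IsYD Y) (hin : (v, j) ∈ Y) (hout : (v + 1, j) ∉ Y) :
    colLen Y j = v := by
  have hj : 1 ≤ j := (hY.1 _ hin).2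
  have := (hY.mem_iff_le_colLen (hY.1 _ hin).1 hj).1 hin
  have := (hY.mem_iff_le_colLen (Nat.le_add_left 1 v) hj).not.1 hout
  omega

lemma rowEndsAt_armDiag (hY : IsYD Y) {i j : ℕ} (hij : (i, j) ∈ Y) :
    RowEndsAt (dk Y) (armDiag Y i) := by
  have hi : 1 ≤ i := (hY.1 _ hij).1
  have hj : 1 ≤ j := (hY.1 _ hij).2
  have := (hY.mem_iff_le_rowLen hi hj).1 hij
  exact hY.rowEndsAt_iff.2 ⟨i, rowLen Y i, (hY.mem_iff_le_rowLen hi (by omega)).2 le_rfl,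
    fun h => by have := (hY.mem_iff_le_rowLen hi (by omega)).1 h; omega, rfl⟩

lemma colEndsAt_legDiag (hY : IsYD Y) {i j : ℕ} (hij : (i, j) ∈ Y) :
    ColEndsAt (dk Y) (legDiag Y j) := by
  have hi : 1 ≤ i := (hY.1 _ hij).1
  have hj : 1 ≤ j := (hY.1 _ hij).2
  have := (hY.mem_iff_le_colLen hi hj).1 hij
  exact hY.colEndsAt_iff.2 ⟨colLen Y j, j, (hY.mem_iff_le_colLen (by omega) hj).2 le_rfl,
    fun h => by have := (hY.mem_iff_le_colLen (by omega) hj).1 h; omega, rfl⟩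

lemma exists_hook_of_endsAt (hY : IsYD Y) {l r : ℤ} (hlr : l ≤ r) (hr : RowEndsAt (dk Y) r)
    (hl : ColEndsAt (dk Y) l) :
    ∃ i j : ℕ, (i, j) ∈ Y ∧ legDiag Y j = l ∧ armDiag Y i = r := by
  obtain ⟨i, w, hin, hout, rfl⟩ := hY.rowEndsAt_iff.1 hr
  obtain ⟨v, j, hin', hout', rfl⟩ := hY.colEndsAt_iff.1 hl
  refine ⟨i, j, ?_, by rw [legDiag, hY.colLen_eq hin' hout'],
    by rw [armDiag, hY.rowLen_eq hin hout]⟩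
  have := hY.1 _ hin
  have := hY.1 _ hin'
  rcases le_total j w with hjw | hwj
  · exact hY.2 _ hin _ (by omega) (by omega) le_rfl hjw
  · exact hY.2 _ hin' _ (by omega) (by omega) (by omega) le_rfl

end IsYD

lemma map_tent_Icc_mirror (m n : ℕ) (l r : ℤ) :
    (Icc ((n : ℤ) - m - r) ((n : ℤ) - m - l)).val.map (tent m n) =
      (Icc l r).val.map (tent m n) := by
  have himage : Icc ((n : ℤ) - m - r) ((n : ℤ) - m - l) =
      (Icc l r).image (fun k => (n : ℤ) - m - k) := by
    ext x
    simp only [mem_Icc, mem_image]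
    exact ⟨fun hx => ⟨(n : ℤ) - m - x, by omega, by omega⟩, by rintro ⟨y, hy, rfl⟩; omega⟩
  rw [himage, image_val_of_injOn fun x _ y _ h => by simpa using h, Multiset.map_map]
  exact Multiset.map_congr rfl fun k _ => by simp only [Function.comp_apply, tent]; omega

lemma sum_Icc_add_one_add_one (f : ℤ → ℤ) {l r : ℤ} (h : l ≤ r) :
    ∑ k ∈ Icc (l + 1) (r + 1), f k = ∑ k ∈ Icc l r, f k + f (r + 1) - f l := by
  have htop := sum_insert (f := f) (s := Icc l r) (a := r + 1) (by simp)
  have hbot := sum_insert (f := f) (s := Icc (l + 1) (r + 1)) (a := l) (by simp)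
  rw [insert_Icc_right_eq_Icc_add_one (by omega)] at htop
  rw [insert_Icc_add_one_left_eq_Icc (by omega)] at hbot
  omega

/-- `tent m n` peaks at `(n - m) / 2`; the hypothesis keeps the shifted interval on its left. -/
lemma sum_tent_add_le_sum_tent_shift (m n : ℕ) {l r : ℤ} (hlr : l ≤ r) (d : ℕ)
    (h : l + r + 2 * d ≤ (n : ℤ) - m) :
    ∑ k ∈ Icc l r, tent m n k + d ≤ ∑ k ∈ Icc (l + d) (r + d), tent m n k := by
  induction d with
  | zero => simp
  | succ d ih =>
    have ih := ih (by omega)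
    have hstep := sum_Icc_add_one_add_one (tent m n) (l := l + d) (r := r + d) (by omega)
    have : tent m n (l + d) < tent m n (r + d + 1) := by unfold tent; omega
    rw [Nat.cast_succ, ← add_assoc l, ← add_assoc r, hstep]
    omega

lemma eq_of_sum_tent_eq {m n : ℕ} {c c' d : ℤ} (hd : 0 ≤ d) (hc : 2 * c + d ≤ (n : ℤ) - m)
    (hc' : 2 * c' + d ≤ (n : ℤ) - m)
    (h : ∑ k ∈ Icc c (c + d), tent m n k = ∑ k ∈ Icc c' (c' + d), tent m n k) : c = c' := by
  wlog hle : c ≤ c' generalizing c c'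
  · exact (this hc' hc h.symm (by omega)).symm
  obtain ⟨e, rfl⟩ : ∃ e : ℕ, c' = c + e := ⟨(c' - c).toNat, by omega⟩
  have := sum_tent_add_le_sum_tent_shift m n (l := c) (r := c + d) (by omega) e (by omega)
  rw [add_right_comm c d] at this
  omega

lemma eq_or_eq_mirror_of_map_tent_eq {m n : ℕ} {l r l' r' : ℤ} (hlr : l ≤ r) (hlr' : l' ≤ r')
    (h : (Icc l' r').val.map (tent m n) = (Icc l r).val.map (tent m n)) :
    (l' = l ∧ r' = r) ∨ (l' = n - m - r ∧ r' = n - m - l) := by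
  have hlen : r' - l' = r - l := by
    have := congrArg Multiset.card h
    simp only [Multiset.card_map, card_val, Int.card_Icc] at this
    omega
  have hfold : ∀ a b : ℤ, a ≤ b → ∃ c, (c = a ∨ c = n - m - b) ∧ 2 * c + (b - a) ≤ (n : ℤ) - m ∧
      ∑ k ∈ Icc c (c + (b - a)), tent m n k = ∑ k ∈ Icc a b, tent m n k := by
    intro a b hab
    rcases le_total (a + b) ((n : ℤ) - m) with hc | hc
    · exact ⟨a, Or.inl rfl, by omega, by rw [add_sub_cancel]⟩
    · refine ⟨n - m - b, Or.inr rfl, by omega, ?_⟩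
      rw [show (n : ℤ) - m - b + (b - a) = n - m - a by ring]
      exact congrArg Multiset.sum (map_tent_Icc_mirror m n a b)
  obtain ⟨c, hc, hcs, hcsum⟩ := hfold l r hlr
  obtain ⟨c', hc', hcs', hcsum'⟩ := hfold l' r' hlr'
  rw [hlen] at hcs' hcsum'
  have hsum := congrArg Multiset.sum h
  simp only [← sum_eq_multiset_sum] at hsum
  have := eq_of_sum_tent_eq (by omega) hcs hcs' (by rw [hcsum, hcsum', hsum])
  omega

def bump (a : ℤ → ℤ) (l r : ℤ) : ℤ → ℤ := fun k => if l ≤ k ∧ k ≤ r then a k + 1 else a k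

section DiagonalSequences

variable {a : ℤ → ℤ} {l r s : ℤ}

lemma not_colEndsAt_cut (hlr : l ≤ r) (hl : ColEndsAt a l) : ¬ ColEndsAt (cut a l r) l := by
  unfold ColEndsAt cut at *
  split_ifs <;> omega

lemma rowEndsAt_cut_mirror (hs : s = 0 ∨ s = 1) (hsym : ∀ k, a k = a (s - k))
    (hadj : ∀ k, adjPair k (a (k - 1)) (a k)) (hlr : l ≤ r) (hne : l + r ≠ s)
    (hl : ColEndsAt a l) : RowEndsAt (cut a l r) (s - l) := by
  have := adjPair_iff.1 (hadj l)
  have := hsym l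
  have := hsym (l - 1)
  unfold RowEndsAt ColEndsAt cut at *
  grind

lemma colEndsAt_cut_mirror (hs : s = 0 ∨ s = 1) (hsym : ∀ k, a k = a (s - k))
    (hadj : ∀ k, adjPair k (a (k - 1)) (a k)) (hlr : l ≤ r) (hne : l + r ≠ s)
    (hr : RowEndsAt a r) : ColEndsAt (cut a l r) (s - r) := by
  have := adjPair_iff.1 (hadj (r + 1))
  have := hsym r
  have := hsym (r + 1)
  unfold RowEndsAt ColEndsAt cut at *
  grind

lemma cut_symm (hsym : ∀ k, a k = a (s - k)) (h : l + r = s) (k : ℤ) :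
    cut a l r k = cut a l r (s - k) := by
  have := hsym k
  unfold cut
  split_ifs <;> omega

lemma cut_cut_symm (hsym : ∀ k, a k = a (s - k)) (k : ℤ) :
    cut (cut a l r) (s - r) (s - l) k = cut (cut a l r) (s - r) (s - l) (s - k) := by
  have := hsym k
  unfold cut
  split_ifs <;> omega

lemma cut_bump : cut (bump a l r) l r = a := by
  funext k
  unfold cut bump
  split_ifs <;> omega

lemma bump_symm (hsym : ∀ k, a k = a (s - k)) (h : l + r = s) (k : ℤ) :
    bump a l r k = bump a l r (s - k) := by
  have := hsym k
  unfold bump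
  split_ifs <;> omega

lemma adjPair_bump (hadj : ∀ k, adjPair k (a (k - 1)) (a k)) (hlr : l ≤ r)
    (hl : adjPair l (a (l - 1)) (a l + 1)) (hr : adjPair (r + 1) (a r + 1) (a (r + 1)))
    (k : ℤ) : adjPair k (bump a l r (k - 1)) (bump a l r k) := by
  have := adjPair_iff.1 (hadj k)
  rw [adjPair_iff] at hl hr ⊢
  unfold bump
  grind

lemma le_add_sub_of_adjPair (hadj : ∀ k, adjPair k (a (k - 1)) (a k)) {k k' : ℤ} (hk : 0 ≤ k)
    (hkk' : k ≤ k') : a k ≤ a k' + (k' - k) := by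
  induction k', hkk' using Int.leInduction with
  | base => simp
  | succ k' hk' ih =>
    have := adjPair_iff.1 (hadj (k' + 1))
    rw [add_sub_cancel_right] at this
    omega

end DiagonalSequences

/-- `ρ` is the last diagonal right of the centre where `a` is below `d(Y_{m,n})`; the gap
`d(Y_{m,n}) - a` is antitone on the right, and it drops at `ρ`, so `a` does not. -/
lemma exists_plateau_with_room {m n : ℕ} {a : ℤ → ℤ} (hs : (n : ℤ) - m = 0 ∨ (n : ℤ) - m = 1)
    (hadj : ∀ k, adjPair k (a (k - 1)) (a k)) (hsym : ∀ k, a k = a (n - m - k))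
    (h0 : ∀ k, 0 ≤ a k) (hlt : ∃ k, a k < dk (rect m n) k) :
    ∃ ρ, (n : ℤ) - m ≤ ρ ∧ a ρ = a (ρ + 1) ∧
      ∀ k, n - m - ρ ≤ k → k ≤ ρ → a k < dk (rect m n) k := by
  have hR := dk_rect m n
  have hRsym : ∀ k, dk (rect m n) k = dk (rect m n) (n - m - k) := fun k => by
    rw [hR, hR]; omega
  set S := (Icc ((n : ℤ) - m) n).filter fun k => a k < dk (rect m n) k
  have hmemS : ∀ k, k ∈ S ↔ (n : ℤ) - m ≤ k ∧ a k < dk (rect m n) k := fun k => by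
    have := h0 k
    have := hR k
    simp only [S, mem_filter, mem_Icc]
    exact ⟨fun h => ⟨h.1.1, h.2⟩, fun h => ⟨⟨h.1, by omega⟩, h.2⟩⟩
  have hS : S.Nonempty := by
    obtain ⟨k, hk⟩ := hlt
    rcases le_or_gt ((n : ℤ) - m) k with h | h
    · exact ⟨k, (hmemS k).2 ⟨h, hk⟩⟩
    · exact ⟨n - m - k, (hmemS _).2 ⟨by omega, by rw [← hsym, ← hRsym]; exact hk⟩⟩
  set ρ := S.max' hS
  obtain ⟨hρs, hρroom⟩ := (hmemS ρ).1 (S.max'_mem hS)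
  have hρ1 : ¬ a (ρ + 1) < dk (rect m n) (ρ + 1) := fun h =>
    absurd (S.le_max' _ ((hmemS _).2 ⟨by omega, h⟩)) (by omega)
  have hadjρ := adjPair_iff.1 (hadj (ρ + 1))
  rw [add_sub_cancel_right] at hadjρ
  have := hR ρ
  have := hR (ρ + 1)
  have := h0 ρ
  refine ⟨ρ, hρs, by omega, fun k hk1 hk2 => ?_⟩
  rcases le_or_gt ((n : ℤ) - m) k with h | h
  · have := le_add_sub_of_adjPair hadj (by omega) hk2
    have := hR k
    omega
  · have := le_add_sub_of_adjPair hadj (k := n - m - k) (by omega) (by omega : n - m - k ≤ ρ)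
    have := hR (n - m - k)
    rw [hsym k, hRsym k]
    omega

/-- `A` determines the diagonal interval of a hook up to mirror image, and after removing
`h_Y(i, j)` its own interval no longer bounds a hook. -/
lemma IsYD.mirror_of_Amul_hook_eq {Y : Finset (ℕ × ℕ)} (hY : IsYD Y) {m n i j i' j' : ℕ}
    (hij : (i, j) ∈ Y) (hij' : (i', j') ∈ removeHook Y i j)
    (hA : Amul m n (hook (removeHook Y i j) i' j') = Amul m n (hook Y i j)) :
    legDiag (removeHook Y i j) j' = n - m - armDiag Y i ∧
      armDiag (removeHook Y i j) i' = n - m - legDiag Y j ∧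
      legDiag Y j + armDiag Y i ≠ n - m := by
  have hY' := isYD_removeHook hY hij
  have hnot : legDiag (removeHook Y i j) j' ≠ legDiag Y j := fun h => by
    have hcol := hY'.colEndsAt_legDiag hij'
    rw [funext (hY.dk_removeHook hij), h] at hcol
    exact not_colEndsAt_cut (hY.legDiag_le_armDiag hij) (hY.colEndsAt_legDiag hij) hcol
  rw [hY'.Amul_hook hij', hY.Amul_hook hij] at hA
  rcases eq_or_eq_mirror_of_map_tent_eq (hY.legDiag_le_armDiag hij)
    (hY'.legDiag_le_armDiag hij') hA with ⟨hl, -⟩ | ⟨hl, hr⟩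
  · exact absurd hl hnot
  · exact ⟨hl, hr, fun h => hnot (by omega)⟩

namespace Move

variable {m n : ℕ} {Y Y' : Finset (ℕ × ℕ)}

lemma isYD (h : Move m n Y Y') (hY : IsYD Y) : IsYD Y' := by
  obtain ⟨i, j, hij, ⟨rfl, -⟩ | ⟨i', j', hij', -, rfl⟩⟩ := h
  · exact isYD_removeHook hY hij
  · exact isYD_removeHook (isYD_removeHook hY hij) hij'

lemma subset_rect (h : Move m n Y Y') (hsub : Y ⊆ rect m n) : Y' ⊆ rect m n := by
  obtain ⟨i, j, hij, ⟨rfl, -⟩ | ⟨i', j', hij', -, rfl⟩⟩ := h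
  · exact removeHook_subset_rect hsub hij
  · exact removeHook_subset_rect (removeHook_subset_rect hsub hij) hij'

/-- A move removes either one hook with symmetric diagonals or a pair of mirror-image hooks:
when the diagonals of the first hook are not symmetric, the mirror hook is present afterwards,
so the second removal is forced. -/
lemma dk_symm (h : Move m n Y Y') (hY : IsYD Y) (hs : (n : ℤ) - m = 0 ∨ (n : ℤ) - m = 1)
    (hsym : ∀ k, dk Y k = dk Y (n - m - k)) (k : ℤ) : dk Y' k = dk Y' (n - m - k) := by
  obtain ⟨i, j, hij, ⟨rfl, hnone⟩ | ⟨i', j', hij', hA, rfl⟩⟩ := h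
  · have hY' := isYD_removeHook hY hij
    have hlr := hY.legDiag_le_armDiag hij
    have hself : legDiag Y j + armDiag Y i = n - m := by
      by_contra hne
      have hrow := rowEndsAt_cut_mirror hs hsym hY.adjPair_dk hlr hne (hY.colEndsAt_legDiag hij)
      have hcol := colEndsAt_cut_mirror hs hsym hY.adjPair_dk hlr hne (hY.rowEndsAt_armDiag hij)
      rw [← funext (hY.dk_removeHook hij)] at hrow hcol
      obtain ⟨i', j', hij', hl, hr⟩ := hY'.exists_hook_of_endsAt (by omega) hrow hcol
      refine hnone ⟨i', j', hij', ?_⟩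
      rw [hY'.Amul_hook hij', hY.Amul_hook hij, hl, hr]
      exact map_tent_Icc_mirror m n _ _
    rw [hY.dk_removeHook hij, hY.dk_removeHook hij]
    exact cut_symm hsym hself k
  · obtain ⟨hl, hr, -⟩ := hY.mirror_of_Amul_hook_eq hij hij' hA
    have hY' := isYD_removeHook hY hij
    rw [hY'.dk_removeHook hij', hY'.dk_removeHook hij', hl, hr, funext (hY.dk_removeHook hij)]
    exact cut_cut_symm hsym k

end Move

/-- `Z` is `Y` with a symmetric hook added; removing it forces no second hook. -/
lemma exists_move_to {m n : ℕ} {Y : Finset (ℕ × ℕ)} (hs : (n : ℤ) - m = 0 ∨ (n : ℤ) - m = 1)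
    (hY : IsYD Y) (hsub : Y ⊆ rect m n) (hsym : ∀ k, dk Y k = dk Y (n - m - k))
    (hne : Y ≠ rect m n) :
    ∃ Z, IsYD Z ∧ Z ⊆ rect m n ∧ (∀ k, dk Z k = dk Z (n - m - k)) ∧ Move m n Z Y := by
  have hlt : ∃ k, dk Y k < dk (rect m n) k := by
    by_contra! h
    exact hne (hY.ext_dk (isYD_rect m n) fun k => le_antisymm (dk_mono hsub k) (h k))
  obtain ⟨ρ, hρ, hplat, hroom⟩ := exists_plateau_with_room hs hY.adjPair_dk hsym (dk_nonneg Y) hlt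
  have := hsym ρ
  have := hsym (ρ + 1)
  have hadj := adjPair_bump hY.adjPair_dk (show (n : ℤ) - m - ρ ≤ ρ by omega)
    (by rw [adjPair_iff]; grind) (by rw [adjPair_iff]; omega)
  obtain ⟨Z, hZ, hZsub, hdkZ⟩ := exists_dk_eq (m := m) (n := n) hadj
    (fun k => by unfold bump; have := dk_nonneg Y k; split_ifs <;> omega)
    (fun k => by unfold bump; have := hroom k; have := dk_mono hsub k; split_ifs <;> omega)
  have hrow : RowEndsAt (dk Z) ρ := by
    rw [funext hdkZ]
    unfold RowEndsAt bump
    split_ifs <;> omega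
  have hcol : ColEndsAt (dk Z) (n - m - ρ) := by
    rw [funext hdkZ]
    unfold ColEndsAt bump
    grind
  obtain ⟨i, j, hij, hl, hr⟩ := hZ.exists_hook_of_endsAt (by omega) hrow hcol
  have hZY : removeHook Z i j = Y := (isYD_removeHook hZ hij).ext_dk hY fun k => by
    rw [hZ.dk_removeHook hij, hl, hr, funext hdkZ, cut_bump]
  refine ⟨Z, hZ, hZsub, fun k => ?_, i, j, hij, Or.inl ⟨hZY.symm, ?_⟩⟩
  · rw [hdkZ, hdkZ]
    exact bump_symm hsym (by ring) k
  · rintro ⟨i', j', hij', hA⟩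
    exact (hZ.mirror_of_Amul_hook_eq hij hij' hA).2.2 (by rw [hl, hr]; ring)

lemma reach_iff {m n : ℕ} (hs : (n : ℤ) - m = 0 ∨ (n : ℤ) - m = 1) {Y : Finset (ℕ × ℕ)}
    (hY : IsYD Y) (hsub : Y ⊆ rect m n) :
    Reach m n Y ↔ ∀ k, dk Y k = dk Y (n - m - k) := by
  constructor
  · intro h
    clear hY hsub
    suffices IsYD Y ∧ Y ⊆ rect m n ∧ ∀ k, dk Y k = dk Y (n - m - k) from this.2.2
    induction h with
    | refl => exact ⟨isYD_rect m n, subset_rfl, fun k => by rw [dk_rect, dk_rect]; omega⟩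
    | tail _ hmove ih =>
      exact ⟨hmove.isYD ih.1, hmove.subset_rect ih.2.1, hmove.dk_symm ih.1 hs ih.2.2⟩
  · intro hsym
    induction hd : #(rect m n) - #Y using Nat.strong_induction_on generalizing Y with
    | _ d ih =>
      by_cases hne : Y = rect m n
      · exact hne ▸ Relation.ReflTransGen.refl
      obtain ⟨Z, hZ, hZsub, hZsym, hmove⟩ := exists_move_to hs hY hsub hsym hne
      have := move_card_lt hmove
      have := card_le_card hZsub
      exact (ih _ (by omega) hZ hZsub hZsym rfl).tail hmove

lemma forall_dk_symm_iff_of_subset_rect {m n : ℕ} {Y : Finset (ℕ × ℕ)} (hsub : Y ⊆ rect m n)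
    {s : ℤ} (hs : s = n - m) :
    (∀ k, -(m : ℤ) ≤ k → k ≤ n → dk Y k = dk Y (s - k)) ↔ ∀ k, dk Y k = dk Y (s - k) := by
  refine ⟨fun h k => ?_, fun h k _ _ => h k⟩
  by_cases hk : -(m : ℤ) ≤ k ∧ k ≤ n
  · exact h k hk.1 hk.2
  · rw [dk_eq_zero_of_subset_rect hsub (by omega), dk_eq_zero_of_subset_rect hsub (by omega)]

theorem stmt17_general (n : ℕ) :
    (∀ Y : Finset (ℕ × ℕ), IsYD Y → Y ⊆ rect n n →
      ((∀ i : ℤ, -(n : ℤ) ≤ i → i ≤ (n : ℤ) → dk Y i = dk Y (-i)) ↔ Reach n n Y)) ∧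
    (∀ Y : Finset (ℕ × ℕ), IsYD Y → Y ⊆ rect n (n + 1) →
      ((∀ i : ℤ, -(n : ℤ) ≤ i → i ≤ (n : ℤ) + 1 → dk Y i = dk Y (1 - i)) ↔
        Reach n (n + 1) Y)) := by
  refine ⟨fun Y hY hsub => ?_, fun Y hY hsub => ?_⟩
  · have := forall_dk_symm_iff_of_subset_rect hsub (s := 0) (by ring)
    rw [reach_iff (by simp) hY hsub]
    simpa using this
  · have := forall_dk_symm_iff_of_subset_rect hsub (s := 1) (by push_cast; ring)
    rw [reach_iff (by simp) hY hsub]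
    simpa using this

theorem stmt17 (n : ℕ) (hn : 1 ≤ n) :
    (∀ Y : Finset (ℕ × ℕ), IsYD Y → Y ⊆ rect n n →
      ((∀ i : ℤ, -(n : ℤ) ≤ i → i ≤ (n : ℤ) → dk Y i = dk Y (-i)) ↔ Reach n n Y)) ∧
    (∀ Y : Finset (ℕ × ℕ), IsYD Y → Y ⊆ rect n (n + 1) →
      ((∀ i : ℤ, -(n : ℤ) ≤ i → i ≤ (n : ℤ) + 1 → dk Y i = dk Y (1 - i)) ↔
        Reach n (n + 1) Y)) :=
  stmt17_general n
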